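/- Explicit self-similar profile solves the first integral: let γ₀ > 0, m > −1, γ₀ + m > 0, ν = 1/(γ₀ + 2m + 2), and define on [0,1]: f(ξ) = [ ((γ₀+m)/(m+2)) (γ₀+2m+2)^{−1/(m+1)} (1 − ξ^{(m+2)/(m+1)}) ]^{(m+1)/(γ₀+m)}. Then f(1) = 0, f is monotonically decreasing on (0,1), and f satisfies ν ξ f + f^{γ₀} (−f')^{m} (f') · (−1)^{0} = 0, i.e., ν ξ f(ξ) = f(ξ)^{γ₀} (−f'(ξ))^{m+1} for all ξ ∈ (0,1). -/
import Mathlib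


open Set

/-- The explicit Kompaneets–Zel'dovich–Barenblatt profile
`f(ξ) = [((γ₀+m)/(m+2)) (γ₀+2m+2)^{−1/(m+1)} (1 − ξ^{(m+2)/(m+1)})]^{(m+1)/(γ₀+m)}`
vanishes at `ξ = 1`, is strictly decreasing on `(0,1)`, and satisfies the first
integral `ν ξ f = f^{γ₀} (−f')^{m+1}` with `ν = 1/(γ₀+2m+2)`. -/
theorem explicit_self_similar_profile
    (γ₀ m : ℝ) (hγ₀ : 0 < γ₀) (hm : -1 < m) (hγm : 0 < γ₀ + m)
    (ν : ℝ) (hν : ν = 1 / (γ₀ + 2 * m + 2))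
    (f : ℝ → ℝ)
    (hf : ∀ ξ : ℝ, f ξ =
      ((γ₀ + m) / (m + 2) * (γ₀ + 2 * m + 2) ^ (-1 / (m + 1)) *
        (1 - ξ ^ ((m + 2) / (m + 1)))) ^ ((m + 1) / (γ₀ + m))) :
    f 1 = 0 ∧ StrictAntiOn f (Ioo 0 1) ∧
    ∀ ξ ∈ Ioo (0 : ℝ) 1, ν * ξ * f ξ = f ξ ^ γ₀ * (-(deriv f ξ)) ^ (m + 1) := by
  have hm1 : (0:ℝ) < m + 1 := by linarith
  have hm2 : (0:ℝ) < m + 2 := by linarith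
  have hN : (0:ℝ) < γ₀ + 2 * m + 2 := by linarith
  set C : ℝ := (γ₀ + 2 * m + 2) ^ (-1 / (m + 1)) with hC_def
  have hC : 0 < C := Real.rpow_pos_of_pos hN _
  set p : ℝ := (m + 2) / (m + 1) with hp_def
  set q : ℝ := (m + 1) / (γ₀ + m) with hq_def
  have hp : 0 < p := div_pos hm2 hm1
  have hq : 0 < q := div_pos hm1 hγm
  set A : ℝ := (γ₀ + m) / (m + 2) * C with hA_def
  have hA : 0 < A := mul_pos (div_pos hγm hm2) hC
  have hf' : ∀ ξ : ℝ, f ξ = (A * (1 - ξ ^ p)) ^ q := hf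
  constructor
  · rw [hf' 1, Real.one_rpow]
    simp [Real.zero_rpow hq.ne']
  constructor
  · intro x hx y hy hxy
    rw [hf' x, hf' y]
    have hxp : x ^ p < y ^ p := Real.rpow_lt_rpow hx.1.le hxy hp
    have hyp1 : y ^ p < 1 := Real.rpow_lt_one (hx.1.trans hxy).le hy.2 hp
    have hgy : 0 ≤ A * (1 - y ^ p) := by nlinarith
    exact Real.rpow_lt_rpow hgy (by nlinarith) hq
  · intro ξ hξ
    obtain ⟨hx0, hx1⟩ := hξ
    have hxp1 : ξ ^ p < 1 := Real.rpow_lt_one hx0.le hx1 hp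
    have hxp0 : 0 < ξ ^ p := Real.rpow_pos_of_pos hx0 _
    have hg : 0 < A * (1 - ξ ^ p) := mul_pos hA (by linarith)
    -- derivative computation
    have hd1 : HasDerivAt (fun x : ℝ => x ^ p) (p * ξ ^ (p - 1)) ξ :=
      Real.hasDerivAt_rpow_const (Or.inl hx0.ne')
    have hd2 : HasDerivAt (fun x : ℝ => A * (1 - x ^ p)) (A * -(p * ξ ^ (p - 1))) ξ :=
      (hd1.const_sub 1).const_mul A
    have hd3 : HasDerivAt f
        (A * -(p * ξ ^ (p - 1)) * q * (A * (1 - ξ ^ p)) ^ (q - 1)) ξ := by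
      have := hd2.rpow_const (p := q) (Or.inl hg.ne')
      have hfe : f = fun x : ℝ => (A * (1 - x ^ p)) ^ q := funext hf'
      rw [hfe]; exact this
    have hderiv : -(deriv f ξ) = A * p * q * ξ ^ (p - 1) * (A * (1 - ξ ^ p)) ^ (q - 1) := by
      rw [hd3.deriv]; ring
    have hxpm : 0 < ξ ^ (p - 1) := Real.rpow_pos_of_pos hx0 _
    have hgq : 0 < (A * (1 - ξ ^ p)) ^ (q - 1) := Real.rpow_pos_of_pos hg _
    have hApq : A * p * q = C := by
      rw [hA_def, hp_def, hq_def]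
      field_simp
    rw [hf' ξ, hderiv, hApq]
    rw [Real.mul_rpow (by positivity) hgq.le, Real.mul_rpow hC.le hxpm.le]
    have e1 : C ^ (m + 1) = ν := by
      rw [hν, hC_def, ← Real.rpow_mul hN.le,
        show -1 / (m + 1) * (m + 1) = -1 by field_simp, Real.rpow_neg_one]
      exact (one_div _).symm
    have e2 : (ξ ^ (p - 1)) ^ (m + 1) = ξ := by
      rw [← Real.rpow_mul hx0.le, show (p - 1) * (m + 1) = 1 by rw [hp_def]; field_simp; ring,
        Real.rpow_one]
    have e3 : ((A * (1 - ξ ^ p)) ^ q) ^ γ₀ * ((A * (1 - ξ ^ p)) ^ (q - 1)) ^ (m + 1)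
        = (A * (1 - ξ ^ p)) ^ q := by
      rw [← Real.rpow_mul hg.le, ← Real.rpow_mul hg.le, ← Real.rpow_add hg]
      congr 1
      rw [hq_def]; field_simp; ring
    rw [e1, e2]
    calc ν * ξ * (A * (1 - ξ ^ p)) ^ q
        = ((A * (1 - ξ ^ p)) ^ q) ^ γ₀ * ((A * (1 - ξ ^ p)) ^ (q - 1)) ^ (m + 1) * (ν * ξ) := by
          rw [e3]; ring
      _ = _ := by ring
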